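/- arXiv:1310.7212 — 2 statements merged into one kernel-verified Lean document; each statement's English description precedes it below -/
import Mathlib

section
/- Let U be a real interval, let f and f_n (n ∈ ℕ) be continuous, strictly monotone real functions on U, and suppose that B_{f_n}(x,y,z) → B_f(x,y,z) as n → ∞ for every (x,y,z) ∈ U³ with x ≠ z. Then for every n-tuple a ∈ Uⁿ and every weight vector w (with w_i > 0, ∑ w_i = 1), M_{f_n}(a,w) → M_f(a,w) as n → ∞. -/
/-!
Fix `p < q` in `U`. The normalised functions `x ↦ B_{f_n}(p, x, q)` are strictly increasing
whatever the direction of monotonicity of `f_n`, converge pointwise to `x ↦ B_f(p, x, q)` by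
hypothesis, and, being affine in `f_n`, commute with weighted means. Hence
`B_{f_n}(p, M_{f_n}, q) → B_f(p, M_f, q)`, and since the `B_{f_n}(p, ·, q)` are monotone and
converge to a strictly monotone limit, this forces `M_{f_n} → M_f`.
-/

open Filter Finset Topology

noncomputable def palesOperator (f : ℝ → ℝ) (x y z : ℝ) : ℝ := (f x - f y) / (f x - f z)

lemma palesOperator_strictMonoOn {U : Set ℝ} {f : ℝ → ℝ}
    (hf : StrictMonoOn f U ∨ StrictAntiOn f U) {p q : ℝ} (hp : p ∈ U) (hq : q ∈ U)
    (hpq : p < q) : StrictMonoOn (palesOperator f p · q) U := by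
  intro x hx y hy hxy
  rcases hf with hf | hf
  · exact (div_lt_div_right_of_neg (sub_neg.2 (hf hp hq hpq))).2
      (sub_lt_sub_left (hf hx hy hxy) _)
  · exact div_lt_div_of_pos_right (sub_lt_sub_left (hf hx hy hxy) _)
      (sub_pos.2 (hf hp hq hpq))

lemma sum_mul_sub_div {ι K : Type*} [Fintype ι] [Field K] {w : ι → K} (hw : ∑ i, w i = 1)
    (c d : K) (y : ι → K) : ∑ i, w i * ((c - y i) / d) = (c - ∑ i, w i * y i) / d := by
  simp only [← mul_div_assoc, ← sum_div, mul_sub, sum_sub_distrib, ← sum_mul, hw, one_mul]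

lemma palesOperator_eq_sum {ι : Type*} [Fintype ι] {f : ℝ → ℝ} {w a : ι → ℝ}
    (hw : ∑ i, w i = 1) {M : ℝ} (hM : f M = ∑ i, w i * f (a i)) (p q : ℝ) :
    palesOperator f p M q = ∑ i, w i * palesOperator f p (a i) q := by
  simp only [palesOperator, sum_mul_sub_div hw, hM]

lemma tendsto_of_tendsto_monotoneOn_apply {ι α β : Type*} [LinearOrder α] [TopologicalSpace α]
    [OrderTopology α] [LinearOrder β] [TopologicalSpace β] [OrderTopology β] {l : Filter ι}
    {U : Set α} (hU : U.OrdConnected) {g : α → β} {G : ι → α → β} (hg : StrictMonoOn g U)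
    (hG : ∀ n, MonotoneOn (G n) U) (hGg : ∀ u ∈ U, Tendsto (fun n => G n u) l (𝓝 (g u)))
    {x : α} {xs : ι → α} (hx : x ∈ U) (hxs : ∀ n, xs n ∈ U)
    (hlim : Tendsto (fun n => G n (xs n)) l (𝓝 (g x))) : Tendsto xs l (𝓝 x) := by
  rw [tendsto_order]
  constructor
  · intro u hu
    by_cases huU : u ∈ U
    · filter_upwards [(hGg u huU).eventually_lt hlim (hg huU hx hu)] with n hn
      exact lt_of_not_ge fun h => hn.not_ge (hG n (hxs n) huU h)
    · exact .of_forall fun n => lt_of_not_ge fun h => huU (hU.out (hxs n) hx ⟨h, hu.le⟩)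
  · intro u hu
    by_cases huU : u ∈ U
    · filter_upwards [hlim.eventually_lt (hGg u huU) (hg hx huU hu)] with n hn
      exact lt_of_not_ge fun h => hn.not_ge (hG n huU (hxs n) h)
    · exact .of_forall fun n => lt_of_not_ge fun h => huU (hU.out hx (hxs n) ⟨hu.le, h⟩)

theorem stmt_2_general (U : Set ℝ) (hU : U.OrdConnected)
    (f : ℝ → ℝ) (F : ℕ → ℝ → ℝ)
    (hfm : StrictMonoOn f U ∨ StrictAntiOn f U)
    (hFm : ∀ n, StrictMonoOn (F n) U ∨ StrictAntiOn (F n) U)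
    (hB : ∀ x ∈ U, ∀ y ∈ U, ∀ z ∈ U, x ≠ z →
      Filter.Tendsto (fun n => (F n x - F n y) / (F n x - F n z)) Filter.atTop
        (nhds ((f x - f y) / (f x - f z))))
    (m : ℕ) (a : Fin m → ℝ) (ha : ∀ i, a i ∈ U)
    (w : Fin m → ℝ) (hw1 : ∑ i, w i = 1)
    (Mf : ℝ) (hMf : Mf ∈ U) (hMfe : f Mf = ∑ i, w i * f (a i))
    (MF : ℕ → ℝ) (hMF : ∀ n, MF n ∈ U)
    (hMFe : ∀ n, F n (MF n) = ∑ i, w i * F n (a i)) :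
    Filter.Tendsto MF Filter.atTop (nhds Mf) := by
  rcases U.subsingleton_or_nontrivial with hU1 | hU2
  · exact tendsto_const_nhds.congr fun n => hU1 hMf (hMF n)
  obtain ⟨p, hp, q, hq, hpq⟩ := hU2.exists_lt
  have hBpq : ∀ x ∈ U, Tendsto (fun n => palesOperator (F n) p x q) atTop
      (𝓝 (palesOperator f p x q)) := fun x hx => hB p hp x hx q hq hpq.ne
  refine tendsto_of_tendsto_monotoneOn_apply hU (palesOperator_strictMonoOn hfm hp hq hpq)
    (fun n => (palesOperator_strictMonoOn (hFm n) hp hq hpq).monotoneOn) hBpq hMf hMF ?_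
  simp only [palesOperator_eq_sum hw1 hMfe, palesOperator_eq_sum hw1 (hMFe _)]
  exact tendsto_finsetSum _ fun i _ => (hBpq (a i) (ha i)).const_mul (w i)

/-- **Corollary (pointwise convergence).** If `B_{f_n} → B_f` pointwise on `Δ`,
then `M_{f_n}(a,w) → M_f(a,w)` for every fixed `a` and `w`. -/
theorem stmt_2 (U : Set ℝ) (hU : U.OrdConnected)
    (f : ℝ → ℝ) (F : ℕ → ℝ → ℝ)
    (hfc : ContinuousOn f U) (hfm : StrictMonoOn f U ∨ StrictAntiOn f U)
    (hFc : ∀ n, ContinuousOn (F n) U)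
    (hFm : ∀ n, StrictMonoOn (F n) U ∨ StrictAntiOn (F n) U)
    (hB : ∀ x ∈ U, ∀ y ∈ U, ∀ z ∈ U, x ≠ z →
      Filter.Tendsto (fun n => (F n x - F n y) / (F n x - F n z)) Filter.atTop
        (nhds ((f x - f y) / (f x - f z))))
    (m : ℕ) (a : Fin m → ℝ) (ha : ∀ i, a i ∈ U)
    (w : Fin m → ℝ) (hw : ∀ i, 0 < w i) (hw1 : ∑ i, w i = 1)
    (Mf : ℝ) (hMf : Mf ∈ U) (hMfe : f Mf = ∑ i, w i * f (a i))
    (MF : ℕ → ℝ) (hMF : ∀ n, MF n ∈ U)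
    (hMFe : ∀ n, F n (MF n) = ∑ i, w i * F n (a i)) :
    Filter.Tendsto MF Filter.atTop (nhds Mf) :=
  stmt_2_general U hU f F hfm hFm hB m a ha w hw1 Mf hMf hMfe MF hMF hMFe
end

section
/- Let U be a closed, bounded real interval, and let f, g : U → ℝ be C² functions with nowhere vanishing first derivatives. Then for all (x,y,z) ∈ U³ with x ≠ z: |B_f(x,y,z) − B_g(x,y,z)| ≤ |B_f(x,y,z)| · (exp(‖A_f − A_g‖_*) − 1). -/
/-- The oscillation norm `‖h‖_* := sup_{a,b ∈ U} |∫_a^b h(x) dx|`. -/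
noncomputable def oscNorm (U : Set ℝ) (h : ℝ → ℝ) : ℝ :=
  ⨆ p : U × U, |∫ x in (p.1 : ℝ)..(p.2 : ℝ), h x|

open Set

/-- A continuous nonvanishing function on an interval has constant sign. -/
lemma aux_sign {p q : ℝ} {h : ℝ → ℝ} (hc : ContinuousOn h (Set.Icc p q))
    (h0 : ∀ x ∈ Set.Icc p q, h x ≠ 0) {a b : ℝ} (ha : a ∈ Set.Icc p q)
    (hb : b ∈ Set.Icc p q) : 0 < h a * h b := by
  rcases lt_trichotomy (h a * h b) 0 with hlt | heq | hgt
  · exfalso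
    have hs : Set.uIcc a b ⊆ Set.Icc p q := Set.uIcc_subset_Icc ha hb
    have h0m : (0 : ℝ) ∈ Set.uIcc (h a) (h b) := by
      rcases mul_neg_iff.mp hlt with ⟨h1, h2⟩ | ⟨h1, h2⟩
      · exact Set.mem_uIcc.mpr (Or.inr ⟨le_of_lt h2, le_of_lt h1⟩)
      · exact Set.mem_uIcc.mpr (Or.inl ⟨le_of_lt h1, le_of_lt h2⟩)
    obtain ⟨c, hc1, hc2⟩ := intermediate_value_uIcc (hc.mono hs) h0m
    exact h0 c (hs hc1) hc2
  · exact absurd heq (mul_ne_zero (h0 a ha) (h0 b hb))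
  · exact hgt

/-- Cauchy mean value theorem on a subinterval of `[p,q]`, for `a ≠ b` in any order. -/
lemma aux_cmvt {p q : ℝ} {f f' g g' : ℝ → ℝ}
    (hfc : ContinuousOn f (Set.Icc p q))
    (hff' : ∀ u ∈ Set.Ioo p q, HasDerivAt f (f' u) u)
    (hgc : ContinuousOn g (Set.Icc p q))
    (hgg' : ∀ u ∈ Set.Ioo p q, HasDerivAt g (g' u) u)
    {a b : ℝ} (ha : a ∈ Set.Icc p q) (hb : b ∈ Set.Icc p q) (hab : a ≠ b) :
    ∃ c ∈ Set.Icc p q, (g b - g a) * f' c = (f b - f a) * g' c := by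
  have main : ∀ a b : ℝ, a ∈ Set.Icc p q → b ∈ Set.Icc p q → a < b →
      ∃ c ∈ Set.Icc p q, (g b - g a) * f' c = (f b - f a) * g' c := by
    intro a b ha hb hlt
    have hsub : Set.Icc a b ⊆ Set.Icc p q := Set.Icc_subset_Icc ha.1 hb.2
    have hsub' : Set.Ioo a b ⊆ Set.Ioo p q := Set.Ioo_subset_Ioo ha.1 hb.2
    obtain ⟨c, hc, hceq⟩ := exists_ratio_hasDerivAt_eq_ratio_slope f f' hlt
      (hfc.mono hsub) (fun u hu => hff' u (hsub' hu)) g g'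
      (hgc.mono hsub) (fun u hu => hgg' u (hsub' hu))
    exact ⟨c, hsub (Set.Ioo_subset_Icc_self hc), hceq⟩
  rcases hab.lt_or_gt with h | h
  · exact main a b ha hb h
  · obtain ⟨c, hc, hceq⟩ := main b a hb ha h
    exact ⟨c, hc, by linarith [hceq]⟩

/-- **Inequality (3):** for `f, g` of class `C²` on `[p,q]` with nowhere vanishing first
derivatives, `|B_f(x,y,z) - B_g(x,y,z)| ≤ |B_f(x,y,z)|·(exp(‖A_f - A_g‖_*) - 1)`. -/
theorem stmt_11 (p q : ℝ) (hpq : p ≤ q)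
    (f f' f'' g g' g'' : ℝ → ℝ)
    (hf' : ∀ x ∈ Set.Icc p q, HasDerivWithinAt f (f' x) (Set.Icc p q) x)
    (hf'' : ∀ x ∈ Set.Icc p q, HasDerivWithinAt f' (f'' x) (Set.Icc p q) x)
    (hf''c : ContinuousOn f'' (Set.Icc p q))
    (hf'0 : ∀ x ∈ Set.Icc p q, f' x ≠ 0)
    (hg' : ∀ x ∈ Set.Icc p q, HasDerivWithinAt g (g' x) (Set.Icc p q) x)
    (hg'' : ∀ x ∈ Set.Icc p q, HasDerivWithinAt g' (g'' x) (Set.Icc p q) x)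
    (hg''c : ContinuousOn g'' (Set.Icc p q))
    (hg'0 : ∀ x ∈ Set.Icc p q, g' x ≠ 0)
    (x y z : ℝ) (hx : x ∈ Set.Icc p q) (hy : y ∈ Set.Icc p q) (hz : z ∈ Set.Icc p q)
    (hxz : x ≠ z) :
    |(f x - f y) / (f x - f z) - (g x - g y) / (g x - g z)| ≤
      |(f x - f y) / (f x - f z)| *
        (Real.exp (oscNorm (Set.Icc p q) (fun u => f'' u / f' u - g'' u / g' u)) - 1) := by
  -- continuity facts
  have hfc : ContinuousOn f (Set.Icc p q) := fun u hu => (hf' u hu).continuousWithinAt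
  have hgc : ContinuousOn g (Set.Icc p q) := fun u hu => (hg' u hu).continuousWithinAt
  have hf'c : ContinuousOn f' (Set.Icc p q) := fun u hu => (hf'' u hu).continuousWithinAt
  have hg'c : ContinuousOn g' (Set.Icc p q) := fun u hu => (hg'' u hu).continuousWithinAt
  -- derivatives at interior points
  have hfD : ∀ u ∈ Set.Ioo p q, HasDerivAt f (f' u) u := fun u hu =>
    (hf' u (Set.Ioo_subset_Icc_self hu)).hasDerivAt (Icc_mem_nhds hu.1 hu.2)
  have hgD : ∀ u ∈ Set.Ioo p q, HasDerivAt g (g' u) u := fun u hu =>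
    (hg' u (Set.Ioo_subset_Icc_self hu)).hasDerivAt (Icc_mem_nhds hu.1 hu.2)
  have hf'D : ∀ u ∈ Set.Ioo p q, HasDerivAt f' (f'' u) u := fun u hu =>
    (hf'' u (Set.Ioo_subset_Icc_self hu)).hasDerivAt (Icc_mem_nhds hu.1 hu.2)
  have hg'D : ∀ u ∈ Set.Ioo p q, HasDerivAt g' (g'' u) u := fun u hu =>
    (hg'' u (Set.Ioo_subset_Icc_self hu)).hasDerivAt (Icc_mem_nhds hu.1 hu.2)
  set A : ℝ → ℝ := fun u => f'' u / f' u - g'' u / g' u with hA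
  have hAc : ContinuousOn A (Set.Icc p q) :=
    (hf''c.div hf'c hf'0).sub (hg''c.div hg'c hg'0)
  set M : ℝ := oscNorm (Set.Icc p q) A with hM
  -- FTC : the integral of A from a to b
  have key : ∀ a ∈ Set.Icc p q, ∀ b ∈ Set.Icc p q,
      ∫ u in a..b, A u =
        (Real.log (f' b) - Real.log (g' b)) - (Real.log (f' a) - Real.log (g' a)) := by
    intro a ha b hb
    have hsub : Set.uIcc a b ⊆ Set.Icc p q := Set.uIcc_subset_Icc ha hb
    have hFc : ContinuousOn (fun u => Real.log (f' u) - Real.log (g' u)) (Set.uIcc a b) :=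
      ((hf'c.log hf'0).sub (hg'c.log hg'0)).mono hsub
    apply intervalIntegral.integral_eq_sub_of_hasDeriv_right hFc
    · intro u hu
      have huI : u ∈ Set.Ioo p q := by
        constructor
        · calc p ≤ min a b := le_min ha.1 hb.1
            _ < u := hu.1
        · calc u < max a b := hu.2
            _ ≤ q := max_le ha.2 hb.2
      have huq := Set.Ioo_subset_Icc_self huI
      exact (((hf'D u huI).log (hf'0 u huq)).sub
        ((hg'D u huI).log (hg'0 u huq))).hasDerivWithinAt
    · exact (hAc.mono hsub).intervalIntegrable
  -- the oscillation norm bounds each integral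
  have hMb : ∀ a ∈ Set.Icc p q, ∀ b ∈ Set.Icc p q, |∫ u in a..b, A u| ≤ M := by
    obtain ⟨C, hC⟩ := isCompact_Icc.exists_bound_of_continuousOn hAc
    have hC0 : 0 ≤ C := le_trans (norm_nonneg _) (hC p (Set.left_mem_Icc.mpr hpq))
    have hbdd : BddAbove (Set.range fun pr : (Set.Icc p q) × (Set.Icc p q) =>
        |∫ u in (pr.1 : ℝ)..(pr.2 : ℝ), A u|) := by
      refine ⟨C * (q - p), ?_⟩
      rintro _ ⟨⟨⟨a, ha⟩, ⟨b, hb⟩⟩, rfl⟩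
      have h1 : ‖∫ u in a..b, A u‖ ≤ C * |b - a| := by
        apply intervalIntegral.norm_integral_le_of_norm_le_const
        intro u hu
        have : u ∈ Set.Icc p q := by
          rcases Set.mem_uIoc.mp hu with ⟨h1, h2⟩ | ⟨h1, h2⟩
          · exact ⟨le_of_lt (lt_of_le_of_lt ha.1 h1), le_trans h2 hb.2⟩
          · exact ⟨le_of_lt (lt_of_le_of_lt hb.1 h1), le_trans h2 ha.2⟩
        exact hC u this
      have h2 : |b - a| ≤ q - p := by
        obtain ⟨hpa, haq⟩ := Set.mem_Icc.mp ha
        obtain ⟨hpb, hbq⟩ := Set.mem_Icc.mp hb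
        rw [abs_sub_le_iff]
        constructor <;> linarith
      calc |∫ u in a..b, A u| = ‖∫ u in a..b, A u‖ := rfl
        _ ≤ C * |b - a| := h1
        _ ≤ C * (q - p) := mul_le_mul_of_nonneg_left h2 hC0
    intro a ha b hb
    exact le_ciSup hbdd (⟨⟨a, ha⟩, ⟨b, hb⟩⟩ : (Set.Icc p q) × (Set.Icc p q))
  -- denominators are nonzero
  have hzx : z - x ≠ 0 := sub_ne_zero.mpr (Ne.symm hxz)
  have hfz : f x - f z ≠ 0 := by
    intro h0
    obtain ⟨c, hc, hceq⟩ := aux_cmvt hfc hfD (continuousOn_id) (fun u _ => hasDerivAt_id u)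
      hx hz hxz
    simp only [id_eq] at hceq
    have h1 : (z - x) * f' c = 0 := by rw [hceq]; nlinarith [h0]
    exact hf'0 c hc ((mul_eq_zero.mp h1).resolve_left hzx)
  have hgz : g x - g z ≠ 0 := by
    intro h0
    obtain ⟨c, hc, hceq⟩ := aux_cmvt hgc hgD (continuousOn_id) (fun u _ => hasDerivAt_id u)
      hx hz hxz
    simp only [id_eq] at hceq
    have h1 : (z - x) * g' c = 0 := by rw [hceq]; nlinarith [h0]
    exact hg'0 c hc ((mul_eq_zero.mp h1).resolve_left hzx)
  -- trivial case x = y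
  rcases eq_or_ne x y with rfl | hxy
  · simp
  -- Cauchy MVT applications
  obtain ⟨ξ, hξ, hξeq⟩ := aux_cmvt hgc hgD hfc hfD hy hx (Ne.symm hxy)
  obtain ⟨η, hη, hηeq⟩ := aux_cmvt hgc hgD hfc hfD hz hx (Ne.symm hxz)
  -- hξeq : (f x - f y) * g' ξ = (g x - g y) * f' ξ
  -- hηeq : (f x - f z) * g' η = (g x - g z) * f' η
  set r : ℝ := (g' ξ * f' η) / (f' ξ * g' η) with hr
  have hf'ξ := hf'0 ξ hξ
  have hf'η := hf'0 η hη
  have hg'ξ := hg'0 ξ hξ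
  have hg'η := hg'0 η hη
  have hrpos : 0 < r := by
    have h1 : 0 < g' ξ * g' η := aux_sign hg'c hg'0 hξ hη
    have h2 : 0 < f' ξ * f' η := aux_sign hf'c hf'0 hξ hη
    have h3 : 0 < (g' ξ * f' η) * (f' ξ * g' η) := by nlinarith
    rcases mul_pos_iff.mp h3 with ⟨ha, hb⟩ | ⟨ha, hb⟩
    · exact div_pos ha hb
    · rw [hr]
      exact div_pos_iff.mpr (Or.inr ⟨ha, hb⟩)
  -- the key factorization B_g = B_f * r
  have e3 : (g x - g y) / (g x - g z) = (f x - f y) / (f x - f z) * r := by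
    rw [hr]
    field_simp
    linear_combination (-(f x - f z) * g' η) * hξeq + ((f x - f y) * g' ξ) * hηeq
  -- bound on r via the integral
  have hLr : Real.log r = -(∫ u in η..ξ, A u) := by
    rw [key η hη ξ hξ, hr, Real.log_div (mul_ne_zero hg'ξ hf'η) (mul_ne_zero hf'ξ hg'η),
      Real.log_mul hg'ξ hf'η, Real.log_mul hf'ξ hg'η]
    ring
  have hLb : |∫ u in η..ξ, A u| ≤ M := hMb η hη ξ hξ
  have hrub : r ≤ Real.exp M := by
    have : Real.log r ≤ M := by
      rw [hLr]; exact le_trans (neg_le_abs _) hLb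
    calc r = Real.exp (Real.log r) := (Real.exp_log hrpos).symm
      _ ≤ Real.exp M := Real.exp_le_exp.mpr this
  have hrlb : Real.exp (-M) ≤ r := by
    have : -M ≤ Real.log r := by
      rw [hLr]
      have := (abs_le.mp hLb).2
      linarith
    calc Real.exp (-M) ≤ Real.exp (Real.log r) := Real.exp_le_exp.mpr this
      _ = r := Real.exp_log hrpos
  -- conclude
  have habs : |1 - r| ≤ Real.exp M - 1 := by
    have h1 : M + 1 ≤ Real.exp M := Real.add_one_le_exp M
    have h2 : -M + 1 ≤ Real.exp (-M) := Real.add_one_le_exp (-M)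
    rcases le_total r 1 with h | h
    · rw [abs_of_nonneg (by linarith)]
      linarith
    · rw [abs_of_nonpos (by linarith)]
      linarith
  rw [e3]
  calc |(f x - f y) / (f x - f z) - (f x - f y) / (f x - f z) * r|
      = |(f x - f y) / (f x - f z)| * |1 - r| := by
        rw [← abs_mul]; ring_nf
    _ ≤ |(f x - f y) / (f x - f z)| * (Real.exp M - 1) :=
        mul_le_mul_of_nonneg_left habs (abs_nonneg _)
end
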